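/- arXiv:2105.02851 — 3 statements merged into one kernel-verified Lean document; each statement's English description precedes it below -/
import Mathlib

section
/- In a finite edge-weighted directed graph where every vertex has an outgoing edge, for every infinite walk ξ from a vertex q₀, the minimum edge weight occurring along ξ (i.e., inf over traversed edge weights) equals the minimum weight along some 'simple execution': a walk consisting of a cycle-free path from q₀ followed by infinite repetition of a simple cycle. Consequently, the maximum over all infinite walks of the min-value equals the maximum over simple executions. -/
/-- An infinite walk in the graph `E`. -/
def IsWalk {V : Type*} (E : V → V → Prop) (ξ : ℕ → V) : Prop :=
  ∀ i, E (ξ i) (ξ (i + 1))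

/-- The min-value of an infinite walk: infimum of traversed edge weights. -/
noncomputable def minVal {V : Type*} (w : V → V → ℝ) (ξ : ℕ → V) : ℝ :=
  ⨅ i, w (ξ i) (ξ (i + 1))

/-- A simple execution from `q₀`: a cycle-free prefix of length `N` followed by
infinite repetition of a simple cycle of period `p`. -/
def IsSimpleExec {V : Type*} (E : V → V → Prop) (q₀ : V) (ζ : ℕ → V) : Prop :=
  IsWalk E ζ ∧ ζ 0 = q₀ ∧
    ∃ N p, 0 < p ∧ (∀ i, N ≤ i → ζ (i + p) = ζ i) ∧
      Set.InjOn ζ (Set.Ico N (N + p)) ∧ Set.InjOn ζ (Set.Iio N)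

/-- Key lemma: if an infinite walk from `q₀` has all edge weights `≥ m` and some
edge of weight exactly `m`, then there is a simple execution with min-value `m`. -/
lemma key_lemma {V : Type*} [Fintype V] (E : V → V → Prop) (w : V → V → ℝ) (q₀ : V) (m : ℝ) :
    ∀ n (ξ : ℕ → V), IsWalk E ξ → ξ 0 = q₀ → (∀ i, m ≤ w (ξ i) (ξ (i + 1))) →
      w (ξ n) (ξ (n + 1)) = m →
      ∃ ζ : ℕ → V, IsSimpleExec E q₀ ζ ∧ minVal w ζ = m := by
  intro n
  induction n using Nat.strong_induction_on with
  | _ n IH =>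
    intro ξ hw h0 hlb hn
    classical
    -- there is a repeated vertex
    have hex : ∃ k, ∃ t, t < k ∧ ξ t = ξ k := by
      obtain ⟨a, b, hab, he⟩ := Finite.exists_ne_map_eq_of_infinite ξ
      rcases lt_or_gt_of_ne hab with h | h
      · exact ⟨b, a, h, he⟩
      · exact ⟨a, b, h, he.symm⟩
    set k := Nat.find hex with hkdef
    obtain ⟨t, htk, hteq⟩ : ∃ t, t < k ∧ ξ t = ξ k := Nat.find_spec hex
    have hmin : ∀ k' < k, ¬ ∃ t, t < k' ∧ ξ t = ξ k' := fun k' h => Nat.find_min hex h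
    have hinj : Set.InjOn ξ (Set.Iio k) := by
      intro a ha b hb hab
      by_contra hne
      rcases lt_or_gt_of_ne hne with h | h
      · exact hmin b hb ⟨a, h, hab⟩
      · exact hmin a ha ⟨b, h, hab.symm⟩
    by_cases hnk : n < k
    · -- the min edge occurs before the first repeat: build the lasso
      set p := k - t with hpdef
      have hp : 0 < p := by omega
      have hkp : k = t + p := by omega
      set ζ : ℕ → V := fun i => if i < t then ξ i else ξ (t + (i - t) % p) with hζdef
      have hζlt : ∀ i < k, ζ i = ξ i := by
        intro i hi
        by_cases h : i < t
        · simp [hζdef, h]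
        · have h1 : (i - t) % p = i - t := Nat.mod_eq_of_lt (by omega)
          simp only [hζdef, if_neg h, h1]
          congr 1
          omega
      have hper : ∀ i, t ≤ i → ζ (i + p) = ζ i := by
        intro i hi
        simp only [hζdef, if_neg (by omega : ¬ i + p < t), if_neg (by omega : ¬ i < t)]
        congr 2
        rw [show i + p - t = (i - t) + p by omega, Nat.add_mod_right]
      have hζk : ζ k = ξ k := by
        have h1 : ζ (t + p) = ζ t := hper t le_rfl
        rw [hkp, h1, hζlt t (by omega), hteq, ← hkp]
      have hζle : ∀ i ≤ k, ζ i = ξ i := by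
        intro i hi
        rcases lt_or_eq_of_le hi with h | h
        · exact hζlt i h
        · rw [h]; exact hζk
      have hperq : ∀ q i, t ≤ i → ζ (i + q * p) = ζ i := by
        intro q
        induction q with
        | zero => intro i _; simp
        | succ q ih =>
          intro i hi
          have : i + (q + 1) * p = (i + q * p) + p := by ring
          rw [this, hper (i + q * p) (by omega), ih i hi]
      have hcanon : ∀ i, t ≤ i → ∃ r, r < p ∧ ζ i = ξ (t + r) ∧ ζ (i + 1) = ξ (t + r + 1) := by
        intro i hi
        set r := (i - t) % p with hrdef
        set q := (i - t) / p with hqdef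
        have hdm : p * q + r = i - t := Nat.div_add_mod (i - t) p
        have hr : r < p := Nat.mod_lt _ hp
        have h2 : i = (t + r) + q * p := by
          have : p * q = q * p := by ring
          omega
        have h3 : i + 1 = (t + r + 1) + q * p := by omega
        refine ⟨r, hr, ?_, ?_⟩
        · rw [h2, hperq q (t + r) (by omega), hζlt (t + r) (by omega)]
        · rw [h3, hperq q (t + r + 1) (by omega)]
          exact hζle (t + r + 1) (by omega)
      have hpair : ∀ i, ∃ j, ζ i = ξ j ∧ ζ (i + 1) = ξ (j + 1) := by
        intro i
        by_cases h : i < t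
        · exact ⟨i, hζle i (by omega), hζle (i + 1) (by omega)⟩
        · obtain ⟨r, hr, h1, h2⟩ := hcanon i (by omega)
          exact ⟨t + r, h1, h2⟩
      have hwalk : IsWalk E ζ := by
        intro i
        obtain ⟨j, h1, h2⟩ := hpair i
        rw [h1, h2]; exact hw j
      have hbdd : BddBelow (Set.range fun i => w (ζ i) (ζ (i + 1))) := by
        refine ⟨m, ?_⟩
        rintro x ⟨i, rfl⟩
        obtain ⟨j, h1, h2⟩ := hpair i
        show m ≤ w (ζ i) (ζ (i + 1))
        rw [h1, h2]; exact hlb j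
      refine ⟨ζ, ⟨hwalk, by rw [hζle 0 (by omega), h0], t, p, hp, hper, ?_, ?_⟩, ?_⟩
      · rintro a ⟨ha1, ha2⟩ b ⟨hb1, hb2⟩ hab
        rw [hζlt a (by omega), hζlt b (by omega)] at hab
        exact hinj (Set.mem_Iio.2 (by omega)) (Set.mem_Iio.2 (by omega)) hab
      · intro a ha b hb hab
        simp only [Set.mem_Iio] at ha hb
        rw [hζlt a (by omega), hζlt b (by omega)] at hab
        exact hinj (Set.mem_Iio.2 (by omega)) (Set.mem_Iio.2 (by omega)) hab
      · -- minVal ζ = m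
        have hval : w (ζ n) (ζ (n + 1)) = m := by
          rw [hζle n (by omega), hζle (n + 1) (by omega)]; exact hn
        refine le_antisymm (hval ▸ ciInf_le hbdd n) (le_ciInf fun i => ?_)
        obtain ⟨j, h1, h2⟩ := hpair i
        rw [h1, h2]; exact hlb j
    · -- the min edge occurs after the first repeat: cut the cycle out and recurse
      push_neg at hnk
      set d := k - t with hddef
      have hd : 0 < d := by omega
      set ξ' : ℕ → V := fun i => if i < t then ξ i else ξ (i + d) with hξ'def
      have hξle : ∀ i ≤ t, ξ' i = ξ i := by
        intro i hi
        rcases lt_or_eq_of_le hi with h | h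
        · simp [hξ'def, h]
        · subst h
          simp only [hξ'def, if_neg (lt_irrefl i)]
          rw [show i + d = k by omega, ← hteq]
      have hξge : ∀ i, t ≤ i → ξ' i = ξ (i + d) := by
        intro i hi
        rcases eq_or_lt_of_le hi with h | h
        · rw [← h, hξle t le_rfl, hteq]
          congr 1; omega
        · simp only [hξ'def, if_neg (by omega : ¬ i < t)]
      have hpair : ∀ i, ∃ j, ξ' i = ξ j ∧ ξ' (i + 1) = ξ (j + 1) := by
        intro i
        by_cases h : i < t
        · exact ⟨i, hξle i (by omega), hξle (i + 1) (by omega)⟩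
        · refine ⟨i + d, hξge i (by omega), ?_⟩
          rw [hξge (i + 1) (by omega)]
          congr 1; omega
      have hwalk : IsWalk E ξ' := by
        intro i
        obtain ⟨j, h1, h2⟩ := hpair i
        rw [h1, h2]; exact hw j
      have hlb' : ∀ i, m ≤ w (ξ' i) (ξ' (i + 1)) := by
        intro i
        obtain ⟨j, h1, h2⟩ := hpair i
        rw [h1, h2]; exact hlb j
      have hval : w (ξ' (n - d)) (ξ' (n - d + 1)) = m := by
        rw [hξge (n - d) (by omega), hξge (n - d + 1) (by omega),
          show n - d + d = n by omega, show n - d + 1 + d = n + 1 by omega]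
        exact hn
      exact IH (n - d) (by omega) ξ' hwalk (by rw [hξle 0 (by omega)]; exact h0) hlb' hval

theorem min_value_attained_by_simple_execution
    {V : Type*} [Fintype V] [Nonempty V] (E : V → V → Prop)
    (hout : ∀ v, ∃ u, E v u) (w : V → V → ℝ) (q₀ : V) :
    (∀ ξ : ℕ → V, IsWalk E ξ → ξ 0 = q₀ →
      ∃ ζ : ℕ → V, IsSimpleExec E q₀ ζ ∧ minVal w ξ = minVal w ζ) ∧
    sSup {x | ∃ ξ : ℕ → V, IsWalk E ξ ∧ ξ 0 = q₀ ∧ x = minVal w ξ} =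
      sSup {x | ∃ ζ : ℕ → V, IsSimpleExec E q₀ ζ ∧ x = minVal w ζ} := by
  have main : ∀ ξ : ℕ → V, IsWalk E ξ → ξ 0 = q₀ →
      ∃ ζ : ℕ → V, IsSimpleExec E q₀ ζ ∧ minVal w ξ = minVal w ζ := by
    intro ξ hw h0
    set f : ℕ → ℝ := fun i => w (ξ i) (ξ (i + 1)) with hfdef
    have hfin : (Set.range f).Finite := by
      refine Set.Finite.subset (Set.finite_range (fun p : V × V => w p.1 p.2)) ?_
      rintro x ⟨i, rfl⟩
      exact ⟨(ξ i, ξ (i + 1)), rfl⟩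
    have hne : (Set.range f).Nonempty := ⟨f 0, Set.mem_range_self 0⟩
    have hmem : sInf (Set.range f) ∈ Set.range f := hne.csInf_mem hfin
    have heq : minVal w ξ = sInf (Set.range f) := rfl
    obtain ⟨n, hn⟩ := hmem
    have hlb : ∀ i, minVal w ξ ≤ f i := fun i => ciInf_le hfin.bddBelow i
    obtain ⟨ζ, hζ, hv⟩ := key_lemma E w q₀ (minVal w ξ) n ξ hw h0 hlb (by rw [heq]; exact hn)
    exact ⟨ζ, hζ, hv.symm⟩
  refine ⟨main, ?_⟩
  congr 1
  ext x
  simp only [Set.mem_setOf_eq]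
  constructor
  · rintro ⟨ξ, hw, h0, rfl⟩
    obtain ⟨ζ, hζ, hv⟩ := main ξ hw h0
    exact ⟨ζ, hζ, hv⟩
  · rintro ⟨ζ, ⟨hw, h0, _⟩, rfl⟩
    exact ⟨ζ, hw, h0, rfl⟩
end

section
/- For the discounted-sum value function V on a finite graph as above, the supremum V(q) is attained by a 'memoryless' walk: there exists a choice function σ : V → E selecting an outgoing edge at each vertex such that the infinite walk from q following σ achieves discounted sum exactly V(q). -/
noncomputable def DS {V : Type*} (γ : ℝ) (w : V → V → ℝ) (ξ : ℕ → V) : ℝ :=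
  ∑' i, γ ^ i * w (ξ i) (ξ (i + 1))

noncomputable def Vds {V : Type*} (E : V → V → Prop) (γ : ℝ) (w : V → V → ℝ) (q : V) : ℝ :=
  sSup {x | ∃ ξ : ℕ → V, IsWalk E ξ ∧ ξ 0 = q ∧ x = DS γ w ξ}

section Aux
variable {V : Type*} (E : V → V → Prop) (w : V → V → ℝ) (M : ℝ) (γ : ℝ)

lemma ds_summable (hγ0 : 0 < γ) (hγ1 : γ < 1)
    (ξ : ℕ → V) (h : ∀ i, |w (ξ i) (ξ (i + 1))| ≤ M) :
    Summable fun i => γ ^ i * w (ξ i) (ξ (i + 1))  := by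
  apply Summable.of_norm
  apply Summable.of_nonneg_of_le (fun i => norm_nonneg _) (fun i => ?_)
    ((summable_geometric_of_lt_one hγ0.le hγ1).mul_right M)
  rw [Real.norm_eq_abs, abs_mul, abs_pow, abs_of_pos hγ0]
  exact mul_le_mul_of_nonneg_left (h i) (pow_nonneg hγ0.le i)

lemma ds_abs_le (hγ0 : 0 < γ) (hγ1 : γ < 1)
    (ξ : ℕ → V) (h : ∀ i, |w (ξ i) (ξ (i + 1))| ≤ M) :
    |DS γ w ξ| ≤ M / (1 - γ) := by
  have hs := ds_summable w M γ hγ0 hγ1 ξ h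
  have hg : Summable fun i : ℕ => γ ^ i * M :=
    (summable_geometric_of_lt_one hγ0.le hγ1).mul_right M
  have h1 : |DS γ w ξ| ≤ ∑' i, γ ^ i * M := by
    calc |DS γ w ξ| = ‖DS γ w ξ‖ := (Real.norm_eq_abs _).symm
      _ ≤ ∑' i, ‖γ ^ i * w (ξ i) (ξ (i + 1))‖ := norm_tsum_le_tsum_norm hs.norm
      _ ≤ ∑' i, γ ^ i * M := by
          apply Summable.tsum_le_tsum _ hs.norm hg
          intro i
          rw [Real.norm_eq_abs, abs_mul, abs_pow, abs_of_pos hγ0]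
          exact mul_le_mul_of_nonneg_left (h i) (pow_nonneg hγ0.le i)
  have h2 : ∑' i : ℕ, γ ^ i * M = M / (1 - γ) := by
    rw [tsum_mul_right, tsum_geometric_of_lt_one hγ0.le hγ1]
    rw [div_eq_mul_inv, mul_comm]
  linarith [h1, h2.symm ▸ h1]

lemma ds_shift (hγ0 : 0 < γ) (hγ1 : γ < 1)
    (ξ : ℕ → V) (h : ∀ i, |w (ξ i) (ξ (i + 1))| ≤ M) :
    DS γ w ξ = w (ξ 0) (ξ 1) + γ * DS γ w (fun n => ξ (n + 1)) := by
  have hs := ds_summable w M γ hγ0 hγ1 ξ h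
  unfold DS
  rw [Summable.tsum_eq_zero_add hs]
  simp only [pow_zero, one_mul]
  congr 1
  have : ∀ i : ℕ, γ ^ (i + 1) * w (ξ (i + 1)) (ξ (i + 1 + 1))
      = γ * (γ ^ i * w (ξ (i + 1)) (ξ (i + 1 + 1))) := by
    intro i; ring
  simp only [this]
  rw [tsum_mul_left]

end Aux

theorem memoryless_optimal_walk
    {V : Type*} [Fintype V] [Nonempty V] (E : V → V → Prop)
    (hout : ∀ v, ∃ u, E v u)
    (w : V → V → ℝ) (M : ℝ) (hM : ∀ q q', E q q' → |w q q'| ≤ M)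
    (γ : ℝ) (hγ0 : 0 < γ) (hγ1 : γ < 1) (q : V) :
    ∃ σ : V → V, (∀ v, E v (σ v)) ∧ DS γ w (fun n => σ^[n] q) = Vds E γ w q := by
  classical
  set S : V → Set ℝ := fun v => {x | ∃ ξ : ℕ → V, IsWalk E ξ ∧ ξ 0 = v ∧ x = DS γ w ξ}
    with hS
  have hVds : ∀ v, Vds E γ w v = sSup (S v) := fun v => rfl
  -- walk weight bound
  have hwb : ∀ ξ : ℕ → V, IsWalk E ξ → ∀ i, |w (ξ i) (ξ (i + 1))| ≤ M := by
    intro ξ hξ i; exact hM _ _ (hξ i)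
  -- nonempty
  set c : V → V := fun v => (hout v).choose with hc
  have hcE : ∀ v, E v (c v) := fun v => (hout v).choose_spec
  have hciter : ∀ v, IsWalk E (fun n => c^[n] v) := by
    intro v i
    simp only [Function.iterate_succ_apply']
    exact hcE _
  have hne : ∀ v, (S v).Nonempty := by
    intro v
    exact ⟨DS γ w (fun n => c^[n] v), ⟨_, hciter v, rfl, rfl⟩⟩
  -- boundedness
  have habs : ∀ v, ∀ x ∈ S v, |x| ≤ M / (1 - γ) := by
    rintro v x ⟨ξ, hξ, -, rfl⟩
    exact ds_abs_le w M γ hγ0 hγ1 ξ (hwb ξ hξ)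
  have hbdd : ∀ v, BddAbove (S v) := by
    intro v
    exact ⟨M / (1 - γ), fun x hx => (abs_le.mp (habs v x hx)).2⟩
  have hVle : ∀ v, Vds E γ w v ≤ M / (1 - γ) := by
    intro v
    exact csSup_le (hne v) (fun x hx => (abs_le.mp (habs v x hx)).2)
  have hVge : ∀ v, -(M / (1 - γ)) ≤ Vds E γ w v := by
    intro v
    obtain ⟨x, hx⟩ := hne v
    exact le_trans (abs_le.mp (habs v x hx)).1 (le_csSup (hbdd v) hx)
  have hVabs : ∀ v, |Vds E γ w v| ≤ M / (1 - γ) := by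
    intro v; rw [abs_le]; exact ⟨hVge v, hVle v⟩
  -- Bellman ≥ : for each edge
  have hBge : ∀ v u, E v u → w v u + γ * Vds E γ w u ≤ Vds E γ w v := by
    intro v u hvu
    have h1 : Vds E γ w u ≤ (Vds E γ w v - w v u) / γ := by
      rw [hVds u]
      apply csSup_le (hne u)
      rintro x ⟨ξ, hξ, hξ0, rfl⟩
      set ξ' : ℕ → V := fun n => Nat.casesOn n v ξ with hξ'
      have hw' : IsWalk E ξ' := by
        intro i
        cases i with
        | zero => simpa [hξ', hξ0] using hvu
        | succ n => exact hξ n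
      have hmem : DS γ w ξ' ∈ S v := ⟨ξ', hw', rfl, rfl⟩
      have hshift : DS γ w ξ' = w v (ξ 0) + γ * DS γ w ξ := by
        have := ds_shift w M γ hγ0 hγ1 ξ' (hwb ξ' hw')
        simpa [hξ'] using this
      have hle : DS γ w ξ' ≤ Vds E γ w v := le_csSup (hbdd v) hmem
      rw [le_div_iff₀ hγ0]
      rw [hshift, hξ0] at hle
      linarith
    have := (le_div_iff₀ hγ0).mp h1
    linarith
  -- maximizer σ
  have hσex : ∀ v : V, ∃ u, E v u ∧
      ∀ u', E v u' → w v u' + γ * Vds E γ w u' ≤ w v u + γ * Vds E γ w u := by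
    intro v
    obtain ⟨u0, hu0⟩ := hout v
    have hns : (Finset.univ.filter (fun u => E v u)).Nonempty :=
      ⟨u0, by simpa using hu0⟩
    obtain ⟨b, hb, hbmax⟩ := Finset.exists_max_image
      (Finset.univ.filter (fun u => E v u)) (fun u => w v u + γ * Vds E γ w u) hns
    refine ⟨b, by simpa using hb, fun u' hu' => hbmax u' (by simpa using hu')⟩
  choose σ hσE hσmax using hσex
  -- Bellman equality along σ
  have hBeq : ∀ v, Vds E γ w v = w v (σ v) + γ * Vds E γ w (σ v) := by
    intro v
    refine le_antisymm ?_ (hBge v (σ v) (hσE v))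
    rw [hVds v]
    apply csSup_le (hne v)
    rintro x ⟨ξ, hξ, hξ0, rfl⟩
    have hshift : DS γ w ξ = w v (ξ 1) + γ * DS γ w (fun n => ξ (n + 1)) := by
      have := ds_shift w M γ hγ0 hγ1 ξ (hwb ξ hξ)
      rwa [hξ0] at this
    have hmem : DS γ w (fun n => ξ (n + 1)) ∈ S (ξ 1) :=
      ⟨fun n => ξ (n + 1), fun i => hξ (i + 1), rfl, rfl⟩
    have h1 : DS γ w (fun n => ξ (n + 1)) ≤ Vds E γ w (ξ 1) := le_csSup (hbdd _) hmem
    have hE1 : E v (ξ 1) := by have := hξ 0; rwa [hξ0] at this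
    have h2 : w v (ξ 1) + γ * Vds E γ w (ξ 1) ≤ w v (σ v) + γ * Vds E γ w (σ v) :=
      hσmax v (ξ 1) hE1
    nlinarith [h1, h2, hγ0.le]
  refine ⟨σ, hσE, ?_⟩
  set ξ : ℕ → V := fun n => σ^[n] q with hξdef
  have hξw : IsWalk E ξ := by
    intro i
    simp only [hξdef, Function.iterate_succ_apply']
    exact hσE _
  -- partial sums telescope
  have key : ∀ n, ∑ i ∈ Finset.range n, γ ^ i * w (ξ i) (ξ (i + 1))
      = Vds E γ w q - γ ^ n * Vds E γ w (ξ n) := by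
    intro n
    induction n with
    | zero => simp [hξdef]
    | succ n ih =>
        rw [Finset.sum_range_succ, ih]
        have hstep : ξ (n + 1) = σ (ξ n) := by
          simp [hξdef, Function.iterate_succ_apply']
        have := hBeq (ξ n)
        rw [hstep]
        rw [this]
        ring
  -- limits
  have hs := ds_summable w M γ hγ0 hγ1 ξ (hwb ξ hξw)
  have h1 : Filter.Tendsto (fun n => ∑ i ∈ Finset.range n, γ ^ i * w (ξ i) (ξ (i + 1)))
      Filter.atTop (nhds (DS γ w ξ)) := hs.hasSum.tendsto_sum_nat
  have h2 : Filter.Tendsto (fun n => γ ^ n * Vds E γ w (ξ n)) Filter.atTop (nhds 0) := by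
    apply squeeze_zero_norm (a := fun n => γ ^ n * (M / (1 - γ)))
    · intro n
      rw [Real.norm_eq_abs, abs_mul, abs_pow, abs_of_pos hγ0]
      exact mul_le_mul_of_nonneg_left (hVabs _) (pow_nonneg hγ0.le n)
    · have := tendsto_pow_atTop_nhds_zero_of_lt_one hγ0.le hγ1
      simpa using this.mul_const (M / (1 - γ))
  have h3 : Filter.Tendsto (fun n => ∑ i ∈ Finset.range n, γ ^ i * w (ξ i) (ξ (i + 1)))
      Filter.atTop (nhds (Vds E γ w q)) := by
    have : Filter.Tendsto (fun n => Vds E γ w q - γ ^ n * Vds E γ w (ξ n))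
        Filter.atTop (nhds (Vds E γ w q - 0)) := (tendsto_const_nhds).sub h2
    simp only [sub_zero] at this
    simpa only [key] using this
  exact tendsto_nhds_unique h1 h3
end

section
/- The min-value function V_min on a finite edge-weighted graph (every vertex with an outgoing edge) satisfies the fixed-point equation V_min(q) = max_{(q,q') ∈ E} min(w(q,q'), V_min(q')), and its values lie in the finite set of edge weights of the graph. -/
noncomputable def Vmin {V : Type*} (E : V → V → Prop) (w : V → V → ℝ) (q : V) : ℝ :=
  sSup {x | ∃ ξ : ℕ → V, IsWalk E ξ ∧ ξ 0 = q ∧ x = minVal w ξ}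

section Aux

variable {V : Type*} [Fintype V]

lemma range_f_finite (w : V → V → ℝ) (ξ : ℕ → V) :
    (Set.range fun i => w (ξ i) (ξ (i + 1))).Finite :=
  (Set.finite_range fun p : V × V => w p.1 p.2).subset
    (by rintro x ⟨i, rfl⟩; exact ⟨(ξ i, ξ (i + 1)), rfl⟩)

lemma inf_attained (f : ℕ → ℝ) (hfin : (Set.range f).Finite) : ∃ i, (⨅ j, f j) = f i := by
  obtain ⟨a, ha, hmin⟩ := Set.exists_min_image (Set.range f) id hfin ⟨f 0, ⟨0, rfl⟩⟩
  obtain ⟨i, rfl⟩ := ha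
  refine ⟨i, le_antisymm (ciInf_le hfin.bddBelow i) (le_ciInf fun j => hmin _ ⟨j, rfl⟩)⟩

lemma inf_succ (f : ℕ → ℝ) (hb : BddBelow (Set.range f)) :
    (⨅ i, f i) = min (f 0) (⨅ i, f (i + 1)) := by
  have hb' : BddBelow (Set.range fun i => f (i + 1)) :=
    hb.mono (by rintro x ⟨i, rfl⟩; exact ⟨i + 1, rfl⟩)
  apply le_antisymm
  · exact le_min (ciInf_le hb 0) (le_ciInf fun i => ciInf_le hb (i + 1))
  · refine le_ciInf fun i => ?_
    cases i with
    | zero => exact min_le_left _ _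
    | succ n => exact (min_le_right _ _).trans (ciInf_le hb' n)

lemma minVal_succ (w : V → V → ℝ) (ξ : ℕ → V) :
    minVal w ξ = min (w (ξ 0) (ξ 1)) (minVal w (fun n => ξ (n + 1))) := by
  have := inf_succ (fun i => w (ξ i) (ξ (i + 1))) (range_f_finite w ξ).bddBelow
  exact this

lemma mem_edge (E : V → V → Prop) (w : V → V → ℝ) {q : V} {x : ℝ}
    (hx : x ∈ {x | ∃ ξ : ℕ → V, IsWalk E ξ ∧ ξ 0 = q ∧ x = minVal w ξ}) :
    ∃ a b, E a b ∧ x = w a b := by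
  obtain ⟨ξ, hw, h0, rfl⟩ := hx
  obtain ⟨i, hi⟩ := inf_attained _ (range_f_finite w ξ)
  exact ⟨ξ i, ξ (i + 1), hw i, hi⟩

lemma Wset_finite (E : V → V → Prop) (w : V → V → ℝ) (q : V) :
    {x | ∃ ξ : ℕ → V, IsWalk E ξ ∧ ξ 0 = q ∧ x = minVal w ξ}.Finite :=
  (Set.finite_range fun p : V × V => w p.1 p.2).subset (by
    intro x hx
    obtain ⟨a, b, _, rfl⟩ := mem_edge E w hx
    exact ⟨(a, b), rfl⟩)

lemma walk_from (E : V → V → Prop) (hout : ∀ v, ∃ u, E v u) (q : V) :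
    ∃ ξ : ℕ → V, IsWalk E ξ ∧ ξ 0 = q := by
  choose nxt hnxt using hout
  exact ⟨fun n => Nat.rec q (fun _ v => nxt v) n, fun i => hnxt _, rfl⟩

lemma Wset_nonempty (E : V → V → Prop) (hout : ∀ v, ∃ u, E v u) (w : V → V → ℝ) (q : V) :
    {x | ∃ ξ : ℕ → V, IsWalk E ξ ∧ ξ 0 = q ∧ x = minVal w ξ}.Nonempty := by
  obtain ⟨ξ, hw, h0⟩ := walk_from E hout q
  exact ⟨minVal w ξ, ξ, hw, h0, rfl⟩

lemma Vmin_mem (E : V → V → Prop) (hout : ∀ v, ∃ u, E v u) (w : V → V → ℝ) (q : V) :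
    Vmin E w q ∈ {x | ∃ ξ : ℕ → V, IsWalk E ξ ∧ ξ 0 = q ∧ x = minVal w ξ} :=
  (Wset_nonempty E hout w q).csSup_mem (Wset_finite E w q)

end Aux

theorem Vmin_fixed_point
    {V : Type*} [Fintype V] [Nonempty V] (E : V → V → Prop)
    (hout : ∀ v, ∃ u, E v u) (w : V → V → ℝ) :
    (∀ q, Vmin E w q = sSup {x | ∃ q', E q q' ∧ x = min (w q q') (Vmin E w q')}) ∧
    (∀ q, ∃ a b, E a b ∧ Vmin E w q = w a b) := by
  constructor
  · intro q
    have hRfin : {x | ∃ q', E q q' ∧ x = min (w q q') (Vmin E w q')}.Finite :=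
      (Set.finite_range fun q' => min (w q q') (Vmin E w q')).subset (by
        rintro x ⟨q', _, rfl⟩; exact ⟨q', rfl⟩)
    have hRne : {x | ∃ q', E q q' ∧ x = min (w q q') (Vmin E w q')}.Nonempty := by
      obtain ⟨q', hq'⟩ := hout q
      exact ⟨_, q', hq', rfl⟩
    apply le_antisymm
    · obtain ⟨ξ, hw, h0, hV⟩ := Vmin_mem E hout w q
      rw [hV, minVal_succ]
      have htail : minVal w (fun n => ξ (n + 1)) ≤ Vmin E w (ξ 1) := by
        apply le_csSup (Wset_finite E w (ξ 1)).bddAbove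
        exact ⟨fun n => ξ (n + 1), fun i => hw (i + 1), rfl, rfl⟩
      calc min (w (ξ 0) (ξ 1)) (minVal w fun n => ξ (n + 1))
          ≤ min (w q (ξ 1)) (Vmin E w (ξ 1)) := by rw [h0]; exact min_le_min le_rfl htail
        _ ≤ _ := le_csSup hRfin.bddAbove ⟨ξ 1, h0 ▸ hw 0, rfl⟩
    · apply csSup_le hRne
      rintro x ⟨q', hq', rfl⟩
      obtain ⟨ξ', hw', h0', hV'⟩ := Vmin_mem E hout w q'
      apply le_csSup (Wset_finite E w q).bddAbove
      refine ⟨fun n => Nat.casesOn n q ξ', fun i => ?_, rfl, ?_⟩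
      · cases i with
        | zero => simpa [h0'] using hq'
        | succ n => exact hw' n
      · rw [minVal_succ]
        show w q q' ⊓ Vmin E w q' = w q (ξ' 0) ⊓ minVal w ξ'
        rw [h0', hV']
  · intro q
    exact mem_edge E w (Vmin_mem E hout w q)
end
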